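/- Let S_t : W → ℝ^m be investment descriptions for t = 0,...,n-1 with ∑_{i=1}^m S_{ti}(w) = 1 for all w, let x_t ∈ ℝ^m be strictly positive return vectors, and define R_t(w) = ∏_{s=0}^{t-1} S_s(w)·x_s (with R_0(w) = 1). Define the universal strategy's investment description U_t = (∫_W S_t(w) R_t(w) dμ(w)) / (∫_W R_t(w) dμ(w)) for a probability measure μ on W. Then the cumulative return ∏_{t=0}^{n-1} U_t · x_t equals ∫_W R_n(w) dμ(w). -/

import Mathlib

open MeasureTheory Finset

/-- Cumulative return up to time `t` of the strategy with parameter `w`: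
`R_t(w) = ∏_{s<t} S_s(w)·x_s`. -/
noncomputable def cumRet {W : Type*} {m : ℕ} (S : ℕ → W → Fin m → ℝ)
    (x : ℕ → Fin m → ℝ) (t : ℕ) (w : W) : ℝ :=
  ∏ s ∈ Finset.range t, ∑ i, S s w i * x s i

/-!
The universal strategy's return at time `t` is linear in the weights `∫ S_t R_t dμ`, and
`∑ᵢ (∫ S_{ti} R_t dμ) x_{ti} = ∫ R_{t+1} dμ` because `R_{t+1} = (S_t · x_t) R_t`. So its
`t`-th factor is `∫ R_{t+1} dμ / ∫ R_t dμ`, and the product telescopes to `∫ R_n dμ / ∫ R_0 dμ`,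
where `R_0 = 1` integrates to `1`.
-/

theorem Finset.prod_range_div_of_ne_zero {G₀ : Type*} [CommGroupWithZero G₀] (f : ℕ → G₀)
    (hf : ∀ t, f t ≠ 0) (n : ℕ) : ∏ t ∈ range n, f (t + 1) / f t = f n / f 0 := by
  induction n with
  | zero => simp [hf 0]
  | succ n ih => rw [prod_range_succ, ih, mul_comm, div_mul_div_cancel₀ (hf n)]

section cumRet

variable {W : Type*} {m : ℕ} (S : ℕ → W → Fin m → ℝ) (x : ℕ → Fin m → ℝ)

@[simp]
theorem cumRet_zero (w : W) : cumRet S x 0 w = 1 := by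
  simp [cumRet]

theorem cumRet_succ (t : ℕ) (w : W) :
    cumRet S x (t + 1) w = ∑ i, S t w i * cumRet S x t w * x t i := by
  rw [cumRet, prod_range_succ, ← cumRet, mul_sum]
  exact sum_congr rfl fun i _ => by ring

variable [MeasurableSpace W] {μ : Measure W}

theorem integral_cumRet_succ {t : ℕ}
    (hint : ∀ i, Integrable (fun w => S t w i * cumRet S x t w) μ) :
    ∫ w, cumRet S x (t + 1) w ∂μ = ∑ i, (∫ w, S t w i * cumRet S x t w ∂μ) * x t i := by
  simp_rw [cumRet_succ, integral_finsetSum _ fun i _ => (hint i).mul_const _,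
    integral_mul_const]

end cumRet

theorem universal_return_is_average_general {W : Type*} [MeasurableSpace W]
    (μ : Measure W) [IsProbabilityMeasure μ] (m n : ℕ)
    (S : ℕ → W → Fin m → ℝ) (x : ℕ → Fin m → ℝ)
    (hint' : ∀ t i, Integrable (fun w => S t w i * cumRet S x t w) μ)
    (hden : ∀ t, (∫ w, cumRet S x t w ∂μ) ≠ 0) :
    (∏ t ∈ Finset.range n,
        ∑ i, ((∫ w, S t w i * cumRet S x t w ∂μ) / (∫ w, cumRet S x t w ∂μ)) * x t i)
      = ∫ w, cumRet S x n w ∂μ := by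
  have hfactor : ∀ t, ∑ i, ((∫ w, S t w i * cumRet S x t w ∂μ) / (∫ w, cumRet S x t w ∂μ))
      * x t i = (∫ w, cumRet S x (t + 1) w ∂μ) / ∫ w, cumRet S x t w ∂μ := fun t => by
    simp_rw [integral_cumRet_succ S x (hint' t), sum_div, div_mul_eq_mul_div]
  simp_rw [hfactor, prod_range_div_of_ne_zero (fun t => ∫ w, cumRet S x t w ∂μ) hden,
    cumRet_zero, integral_const, probReal_univ, smul_eq_mul, mul_one, div_one]

/-- The cumulative return of the universal strategy
`U_t = (∫ S_t R_t dμ)/(∫ R_t dμ)` telescopes: `∏_{t<n} U_t·x_t = ∫ R_n dμ`. -/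
theorem universal_return_is_average {W : Type*} [MeasurableSpace W]
    (μ : Measure W) [IsProbabilityMeasure μ] (m n : ℕ)
    (S : ℕ → W → Fin m → ℝ) (x : ℕ → Fin m → ℝ)
    (hSsum : ∀ t w, ∑ i, S t w i = 1)
    (hSnonneg : ∀ t w i, 0 ≤ S t w i)
    (hpos : ∀ t w, 0 < ∑ i, S t w i * x t i)
    (hint : ∀ t, Integrable (fun w => cumRet S x t w) μ)
    (hint' : ∀ t i, Integrable (fun w => S t w i * cumRet S x t w) μ)
    (hden : ∀ t, (∫ w, cumRet S x t w ∂μ) ≠ 0) :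
    (∏ t ∈ Finset.range n,
        ∑ i, ((∫ w, S t w i * cumRet S x t w ∂μ) / (∫ w, cumRet S x t w ∂μ)) * x t i)
      = ∫ w, cumRet S x n w ∂μ :=
  universal_return_is_average_general μ m n S x hint' hden
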